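/- arXiv:1412.0511 — 4 statements merged into one kernel-verified Lean document; each statement's English description precedes it below -/
import Mathlib

section
/- With z_n as above and ε ∉ {0, 1, −1}, the eigenvalues of z_n are exactly {1, −1, 0, ..., 0} (with 0 of multiplicity n−2) if and only if |a₁|² = |a₂|² = (1−ε²)/2 and a₃ = ... = a_{n−1} = 0. -/
/-!
Move the last row and column of `z_n` to the border of an arrow matrix with diagonal
`(ε, -ε, 0, …, 0)`. Taking the Schur complement of the diagonal block gives, for
`λ ∉ {0, ε, -ε}`, `λ · det (λ - z_n) = λ^(n-3) · q(λ)`, where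
`q = λ⁴ - (ε² + |a₁|² + |a₂|² + S) λ² - ε (|a₁|² - |a₂|²) λ + ε² S` and `S = ∑_{i ≥ 3} |aᵢ|²`.
Since the identity holds at infinitely many points, it is an identity of polynomials. So the
characteristic polynomial is `(λ² - 1) λ^(n-2)` iff `q = λ⁴ - λ²`, i.e.
`ε² + |a₁|² + |a₂|² + S = 1`, `ε (|a₁|² - |a₂|²) = 0` and `ε² S = 0`. For `ε ≠ 0` this says exactly
`S = 0` and `|a₁|² = |a₂|² = (1 - ε²)/2`.
-/

open Matrix Polynomial

namespace Matrix

variable {K ι : Type*} [Field K] [Fintype ι] [DecidableEq ι]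

def arrow (d v w : ι → K) (c : K) : Matrix (ι ⊕ Fin 1) (ι ⊕ Fin 1) K :=
  fromBlocks (diagonal d) (replicateCol (Fin 1) v) (replicateRow (Fin 1) w) !![c]

theorem det_arrow {d : ι → K} (hd : ∀ i, d i ≠ 0) (v w : ι → K) (c : K) :
    (arrow d v w c).det = (∏ i, d i) * (c - ∑ i, w i * v i / d i) := by
  have : Invertible (diagonal d) :=
    invertibleOfIsUnitDet _ (by simpa [det_diagonal, Finset.prod_ne_zero_iff] using hd)
  have hinv : ⅟(diagonal d) = diagonal fun i => (d i)⁻¹ :=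
    invOf_eq_right_inv (by simp [diagonal_mul_diagonal, hd])
  rw [arrow, det_fromBlocks₁₁, hinv, det_diagonal, det_unique]
  simp [mul_apply, diagonal_apply, div_eq_mul_inv, mul_right_comm]

theorem eval_charpoly_arrow {d : ι → K} (v w : ι → K) (c : K) {t : K} (ht : ∀ i, t ≠ d i) :
    (arrow d v w c).charpoly.eval t =
      (∏ i, (t - d i)) * (t - c - ∑ i, w i * v i / (t - d i)) := by
  have hscalar : scalar (ι ⊕ Fin 1) t - arrow d v w c =
      arrow (fun i => t - d i) (-v) (-w) (t - c) := by
    ext (i | i) (j | j)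
    · by_cases h : i = j <;> simp [arrow, h]
    · simp [arrow]
    · simp [arrow]
    · simp [arrow, Subsingleton.elim i j]
  rw [eval_charpoly, hscalar, det_arrow fun i => sub_ne_zero.2 (ht i)]
  simp

theorem forall_det_sub_smul_eq_iff_charpoly_eq {R : Type*} [CommRing R] [IsDomain R]
    [Infinite R] {n : ℕ} (M : Matrix (Fin n) (Fin n) R) (p : R[X]) :
    (∀ t : R, (M - t • 1).det = (-1) ^ n * p.eval t) ↔ M.charpoly = p := by
  have hdet (t : R) : (M - t • 1).det = (-1) ^ n * M.charpoly.eval t := by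
    rw [eval_charpoly, ← neg_sub, det_neg, Fintype.card_fin, smul_one_eq_diagonal, scalar_apply]
  simp only [hdet, mul_right_inj' (pow_ne_zero n (neg_ne_zero.2 one_ne_zero) : (-1 : R) ^ n ≠ 0)]
  exact ⟨Polynomial.funext, fun h t => h ▸ rfl⟩

end Matrix

theorem Polynomial.X_pow_four_sub_eq_iff {R : Type*} [CommRing R] (α β γ : R) :
    X ^ 4 - C α * X ^ 2 - C β * X + C γ = (X ^ 4 - X ^ 2 : R[X]) ↔
      α = 1 ∧ β = 0 ∧ γ = 0 := by
  constructor
  · intro h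
    refine ⟨?_, ?_, ?_⟩
    · simpa [coeff_X, coeff_C] using congrArg (coeff · 2) h
    · simpa [coeff_X, coeff_C] using congrArg (coeff · 1) h
    · simpa [coeff_X, coeff_C] using congrArg (coeff · 0) h
  · rintro ⟨rfl, rfl, rfl⟩
    simp

theorem sum_sq_norm_eq_zero_iff {E : Type*} [NormedAddCommGroup E] (a : ℕ → E) (k m : ℕ) :
    ∑ i : Fin m, ‖a (i + k)‖ ^ 2 = 0 ↔ ∀ i, k ≤ i → i < m + k → a i = 0 := by
  rw [Finset.sum_eq_zero_iff_of_nonneg fun i _ => by positivity]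
  simp only [Finset.mem_univ, true_implies, pow_eq_zero_iff two_ne_zero, norm_eq_zero]
  refine ⟨fun h i hk hm => ?_, fun h i => h _ (by omega) (by omega)⟩
  simpa [Nat.sub_add_cancel hk] using h ⟨i - k, by omega⟩

theorem eq_half_one_sub_sq_iff {K : Type*} [Field K] [CharZero K] {ε A B S : K}
    (hε : ε ≠ 0) :
    (ε ^ 2 + A + B + S = 1 ∧ ε * (A - B) = 0 ∧ ε ^ 2 * S = 0) ↔
      A = (1 - ε ^ 2) / 2 ∧ B = (1 - ε ^ 2) / 2 ∧ S = 0 := by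
  simp only [mul_eq_zero, hε, pow_eq_zero_iff two_ne_zero, false_or, sub_eq_zero]
  constructor
  · rintro ⟨hsum, rfl, rfl⟩
    refine ⟨?_, ?_, rfl⟩ <;> linear_combination hsum / 2
  · rintro ⟨rfl, rfl, rfl⟩
    exact ⟨by ring, rfl, rfl⟩

/-- The matrix `z_n`; the arm entry in row `i` is `a (i + 1)`, so `a` is indexed from `1`. -/
def zArrow (n : ℕ) (ε : ℝ) (a : ℕ → ℂ) : Matrix (Fin n) (Fin n) ℂ := fun i j =>
  if i = j then (if i.val = 0 then (ε : ℂ) else if i.val = 1 then -(ε : ℂ) else 0)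
  else if j.val = n - 1 then a (i.val + 1)
  else if i.val = n - 1 then (starRingEnd ℂ) (a (j.val + 1))
  else 0

theorem reindex_zArrow (m : ℕ) (ε : ℝ) (a : ℕ → ℂ) :
    reindex finSumFinEquiv.symm finSumFinEquiv.symm (zArrow (m + 2 + 1) ε a) =
      arrow (Fin.cons (ε : ℂ) (Fin.cons (-ε : ℂ) 0)) (fun i => a (i + 1))
        (fun i => star (a (i + 1))) 0 := by
  ext (i | i) (j | j)
  · by_cases hij : i = j
    · subst hij
      cases i using Fin.cases with
      | zero => simp [zArrow, arrow]
      | succ i => cases i using Fin.cases <;> simp [zArrow, arrow, Fin.val_succ]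
    · simp [zArrow, arrow, hij, i.isLt.ne, j.isLt.ne]
  · simp [zArrow, arrow, Fin.ext_iff, i.isLt.ne]
  · simp [zArrow, arrow, Fin.ext_iff, j.isLt.ne', j.isLt.ne]
  · simp [zArrow, arrow, Subsingleton.elim i j]

/-- The factor `X` spares the characteristic polynomial itself the exponent `m - 1`. -/
theorem X_mul_charpoly_zArrow (m : ℕ) (ε : ℝ) (a : ℕ → ℂ) :
    X * (zArrow (m + 2 + 1) ε a).charpoly =
      X ^ m * (X ^ 4 - C ((ε ^ 2 + ‖a 1‖ ^ 2 + ‖a 2‖ ^ 2 + ∑ i : Fin m, ‖a (i + 3)‖ ^ 2 : ℝ) : ℂ)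
        * X ^ 2 - C ((ε * (‖a 1‖ ^ 2 - ‖a 2‖ ^ 2) : ℝ) : ℂ) * X
        + C ((ε ^ 2 * ∑ i : Fin m, ‖a (i + 3)‖ ^ 2 : ℝ) : ℂ)) := by
  refine eq_of_infinite_eval_eq _ _
    ((Set.toFinite ({0, (ε : ℂ), -(ε : ℂ)} : Set ℂ)).infinite_compl.mono ?_)
  intro t ht
  simp only [Set.mem_compl_iff, Set.mem_insert_iff, Set.mem_singleton_iff, not_or] at ht
  obtain ⟨h0, hε, hε'⟩ := ht
  have h1 : t - ε ≠ 0 := sub_ne_zero.2 hε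
  have h2 : t + ε ≠ 0 := by rwa [← sub_neg_eq_add, sub_ne_zero]
  have hdiag : ∀ i, t ≠ (Fin.cons (ε : ℂ) (Fin.cons (-ε : ℂ) 0) : Fin (m + 2) → ℂ) i := by
    intro i
    cases i using Fin.cases with
    | zero => exact hε
    | succ i => cases i using Fin.cases <;> simpa
  simp only [Set.mem_ofPred_eq, eval_mul, eval_X]
  rw [← charpoly_reindex finSumFinEquiv.symm, reindex_zArrow, eval_charpoly_arrow _ _ _ hdiag]
  simp [Fin.prod_univ_succ, Fin.sum_univ_succ, Complex.conj_mul', ← Finset.sum_div, eval_finsetSum]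
  field_simp
  ring

theorem arrow_matrix_eigenvalues_iff_general
    (n : ℕ) (hn : 4 ≤ n) (ε : ℝ) (hε0 : ε ≠ 0)
    (a : ℕ → ℂ)
    (z : Matrix (Fin n) (Fin n) ℂ)
    (hz : z = fun i j =>
      if i = j then (if i.val = 0 then (ε : ℂ) else if i.val = 1 then -(ε : ℂ) else 0)
      else if j.val = n - 1 then a (i.val + 1)
      else if i.val = n - 1 then (starRingEnd ℂ) (a (j.val + 1))
      else 0) :
    (∀ lam : ℂ,
        (z - lam • (1 : Matrix (Fin n) (Fin n) ℂ)).det =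
          (-1) ^ n * ((lam - 1) * (lam + 1) * lam ^ (n - 2)))
      ↔ (‖a 1‖ ^ 2 = (1 - ε ^ 2) / 2 ∧
          ‖a 2‖ ^ 2 = (1 - ε ^ 2) / 2 ∧
          ∀ i : ℕ, 3 ≤ i → i ≤ n - 1 → a i = 0) := by
  obtain ⟨m, rfl⟩ : ∃ m, n = m + 2 + 1 := ⟨n - 3, by omega⟩
  change z = zArrow _ ε a at hz
  subst hz
  have hp (t : ℂ) : (t - 1) * (t + 1) * t ^ (m + 2 + 1 - 2) =
      ((X - 1) * (X + 1) * X ^ (m + 1) : ℂ[X]).eval t := by simp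
  simp only [hp, forall_det_sub_smul_eq_iff_charpoly_eq]
  rw [← (mul_right_injective₀ X_ne_zero).eq_iff, X_mul_charpoly_zArrow,
    show X * ((X - 1) * (X + 1) * X ^ (m + 1)) = X ^ m * (X ^ 4 - X ^ 2 : ℂ[X]) by ring,
    (mul_right_injective₀ (pow_ne_zero m X_ne_zero)).eq_iff, X_pow_four_sub_eq_iff]
  norm_cast
  rw [eq_half_one_sub_sq_iff hε0, sum_sq_norm_eq_zero_iff]
  simp only [Nat.add_sub_cancel, Nat.lt_add_one_iff]

/-- For the matrix `z_n` (as in the arrow-matrix computation) with `ε ∉ {0, 1, -1}`, the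
eigenvalues of `z_n` are exactly `{1, -1, 0, ..., 0}` (i.e. the characteristic polynomial is
`(-1)^n (λ-1)(λ+1)λ^{n-2}`) if and only if `|a₁|² = |a₂|² = (1-ε²)/2` and
`a₃ = ⋯ = a_{n-1} = 0`. -/
theorem arrow_matrix_eigenvalues_iff
    (n : ℕ) (hn : 4 ≤ n) (ε : ℝ) (hε0 : ε ≠ 0) (hε1 : ε ≠ 1) (hε1' : ε ≠ -1)
    (a : ℕ → ℂ)
    (z : Matrix (Fin n) (Fin n) ℂ)
    (hz : z = fun i j =>
      if i = j then (if i.val = 0 then (ε : ℂ) else if i.val = 1 then -(ε : ℂ) else 0)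
      else if j.val = n - 1 then a (i.val + 1)
      else if i.val = n - 1 then (starRingEnd ℂ) (a (j.val + 1))
      else 0) :
    (∀ lam : ℂ,
        (z - lam • (1 : Matrix (Fin n) (Fin n) ℂ)).det =
          (-1) ^ n * ((lam - 1) * (lam + 1) * lam ^ (n - 2)))
      ↔ (‖a 1‖ ^ 2 = (1 - ε ^ 2) / 2 ∧
          ‖a 2‖ ^ 2 = (1 - ε ^ 2) / 2 ∧
          ∀ i : ℕ, 3 ≤ i → i ≤ n - 1 → a i = 0) :=
  arrow_matrix_eigenvalues_iff_general n hn ε hε0 a z hz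
end

section
/- Let u = (a_{i,j}) be an n×n strictly upper triangular complex matrix. If the Hermitian matrix u + u* has n−1 positive eigenvalues or n−1 negative eigenvalues, then a_{i,i+1} ≠ 0 for all i = 1,...,n−1. -/
open Finset

open Matrix in

lemma aux_zero_block {n : ℕ} {M : Matrix (Fin n) (Fin n) ℂ} (hM : M.IsHermitian)
    (k k' : Fin n) (hkk' : k ≠ k')
    (h1 : M k k = 0) (h2 : M k k' = 0) (h3 : M k' k = 0) (h4 : M k' k' = 0)
    (S : Finset (Fin n)) (hScard : S.card ≤ 1) (ε : ℝ)
    (hsign : ∀ p, p ∉ S → 0 < ε * hM.eigenvalues p) : False := by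
  classical
  set U : Matrix (Fin n) (Fin n) ℂ := (hM.eigenvectorUnitary : Matrix (Fin n) (Fin n) ℂ) with hU
  obtain ⟨a, b, hab, hcon⟩ : ∃ a b : ℂ, ¬(a = 0 ∧ b = 0) ∧
      ∀ j ∈ S, star (U k j) * a + star (U k' j) * b = 0 := by
    rcases S.eq_empty_or_nonempty with hS | ⟨j0, hj0⟩
    · exact ⟨1, 0, by simp, by simp [hS]⟩
    · have huniq : ∀ j ∈ S, j = j0 := fun j hj => Finset.card_le_one.mp hScard j hj j0 hj0
      by_cases hz : star (U k j0) = 0 ∧ star (U k' j0) = 0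
      · exact ⟨1, 0, by simp, fun j hj => by rw [huniq j hj, hz.1, hz.2]; ring⟩
      · refine ⟨star (U k' j0), -(star (U k j0)), ?_, fun j hj => by rw [huniq j hj]; ring⟩
        rintro ⟨ha, hb⟩
        exact hz ⟨by simpa using hb, ha⟩
  set x : Fin n → ℂ := a • (Pi.single k 1 : Fin n → ℂ) + b • (Pi.single k' 1 : Fin n → ℂ) with hx
  set c : Fin n → ℂ := star U *ᵥ x with hc
  have hcS : ∀ j ∈ S, c j = 0 := by
    intro j hj
    have := hcon j hj
    simp only [hc, hx, mulVec_add, mulVec_smul, mulVec_single, Pi.add_apply, Pi.smul_apply,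
      smul_eq_mul, mul_one, MulOpposite.op_one, one_smul, col_apply]
    have hsu : ∀ p q : Fin n, (star U) p q = star (U q p) := fun p q => rfl
    rw [hsu j k, hsu j k']
    linear_combination this
  have hq0 : star x ⬝ᵥ (M *ᵥ x) = 0 := by
    simp only [hx, star_add, star_smul, mulVec_add, mulVec_smul, mulVec_single, mul_one]
    have hs1 : star (Pi.single k (1:ℂ) : Fin n → ℂ) = Pi.single k (1:ℂ) := by
      ext p; simp [Pi.single_apply, apply_ite (star : ℂ → ℂ)]
    have hs2 : star (Pi.single k' (1:ℂ) : Fin n → ℂ) = Pi.single k' (1:ℂ) := by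
      ext p; simp [Pi.single_apply, apply_ite (star : ℂ → ℂ)]
    rw [hs1, hs2]
    simp only [add_dotProduct, smul_dotProduct, dotProduct_add, dotProduct_smul,
      single_dotProduct, Pi.add_apply, Pi.smul_apply, smul_eq_mul, one_mul,
      MulOpposite.op_one, one_smul, col_apply]
    rw [h1, h2, h3, h4]; ring
  have hq : star x ⬝ᵥ (M *ᵥ x) =
      ∑ p, ((hM.eigenvalues p : ℂ) * (Complex.normSq (c p) : ℂ)) := by
    conv_lhs => rw [hM.spectral_theorem, Unitary.conjStarAlgAut_apply]
    rw [← hU, ← mulVec_mulVec, ← mulVec_mulVec, dotProduct_mulVec]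
    have hvm : star x ᵥ* U = star c := by
      rw [hc, star_mulVec, Matrix.star_eq_conjTranspose, conjTranspose_conjTranspose]
    rw [hvm]
    rw [dotProduct]
    refine Finset.sum_congr rfl fun p _ => ?_
    rw [mulVec_diagonal]
    rw [show ((RCLike.ofReal ∘ hM.eigenvalues) p : ℂ) = ((hM.eigenvalues p : ℝ) : ℂ) from rfl,
      Complex.normSq_eq_conj_mul_self]
    simp only [Pi.star_apply, Complex.star_def]
    ring
  have hreal : ∑ p, (hM.eigenvalues p * Complex.normSq (c p)) = 0 := by
    have := hq0 ▸ hq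
    have h2 : ((∑ p, (hM.eigenvalues p * Complex.normSq (c p)) : ℝ) : ℂ) = 0 := by
      push_cast
      rw [← this]
    exact_mod_cast h2
  have hterm : ∀ p ∈ Finset.univ, 0 ≤ ε * hM.eigenvalues p * Complex.normSq (c p) := by
    intro p _
    by_cases hp : p ∈ S
    · rw [hcS p hp]; simp
    · exact mul_nonneg (hsign p hp).le (Complex.normSq_nonneg _)
  have hsum0 : ∑ p, ε * hM.eigenvalues p * Complex.normSq (c p) = 0 := by
    have : ∑ p, ε * hM.eigenvalues p * Complex.normSq (c p)
        = ε * ∑ p, hM.eigenvalues p * Complex.normSq (c p) := by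
      rw [Finset.mul_sum]; exact Finset.sum_congr rfl fun p _ => by ring
    rw [this, hreal, mul_zero]
  have hczero : ∀ p, c p = 0 := by
    intro p
    by_cases hp : p ∈ S
    · exact hcS p hp
    · have := (Finset.sum_eq_zero_iff_of_nonneg hterm).mp hsum0 p (Finset.mem_univ p)
      have hpos := hsign p hp
      have hns : Complex.normSq (c p) = 0 := by
        rcases mul_eq_zero.mp this with h | h
        · exact absurd h hpos.ne'
        · exact h
      exact Complex.normSq_eq_zero.mp hns
  have hx0 : x = 0 := by
    have hUc : U *ᵥ c = x := by
      rw [hc, mulVec_mulVec, Matrix.mem_unitaryGroup_iff.mp hM.eigenvectorUnitary.2, one_mulVec]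
    have : c = 0 := funext hczero
    rw [← hUc, this, mulVec_zero]
  apply hab
  constructor
  · have := congrFun hx0 k
    simpa [hx, Pi.single_apply, hkk', (Ne.symm hkk')] using this
  · have := congrFun hx0 k'
    simpa [hx, Pi.single_apply, hkk', (Ne.symm hkk')] using this

/-- If `u` is strictly upper triangular and the Hermitian matrix `u + u*` has `n-1`
positive eigenvalues or `n-1` negative eigenvalues (counted with multiplicity), then
every superdiagonal entry `a_{i,i+1}` of `u` is nonzero. -/
theorem superdiagonal_nonzero_of_signed_eigenvalues
    (n : ℕ) (u : Matrix (Fin n) (Fin n) ℂ)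
    (hupper : ∀ i j : Fin n, j ≤ i → u i j = 0)
    (hherm : (u + u.conjTranspose).IsHermitian)
    (heig :
      (n - 1 ≤ (Finset.univ.filter fun i : Fin n => 0 < hherm.eigenvalues i).card) ∨
      (n - 1 ≤ (Finset.univ.filter fun i : Fin n => hherm.eigenvalues i < 0).card)) :
    ∀ (i : ℕ) (h : i + 1 < n), u ⟨i, Nat.lt_of_succ_lt h⟩ ⟨i + 1, h⟩ ≠ 0 := by
  intro i h hcontra
  classical
  set k : Fin n := ⟨i, Nat.lt_of_succ_lt h⟩ with hk
  set k' : Fin n := ⟨i + 1, h⟩ with hk'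
  have hkk' : k ≠ k' := by
    simp only [hk, hk', Ne, Fin.mk.injEq]
    omega
  have hle : k ≤ k' := by
    simp only [hk, hk', Fin.mk_le_mk]
    omega
  have h1 : (u + u.conjTranspose) k k = 0 := by
    simp [Matrix.conjTranspose_apply, hupper k k le_rfl]
  have h4 : (u + u.conjTranspose) k' k' = 0 := by
    simp [Matrix.conjTranspose_apply, hupper k' k' le_rfl]
  have h2 : (u + u.conjTranspose) k k' = 0 := by
    simp [Matrix.conjTranspose_apply, hcontra, hupper k' k hle]
  have h3 : (u + u.conjTranspose) k' k = 0 := by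
    simp [Matrix.conjTranspose_apply, hcontra, hupper k' k hle]
  rcases heig with hpos | hneg
  · refine aux_zero_block hherm k k' hkk' h1 h2 h3 h4
      (Finset.univ.filter fun p : Fin n => ¬ 0 < hherm.eigenvalues p) ?_ 1 ?_
    · have hsplit := Finset.card_filter_add_card_filter_not
        (s := (Finset.univ : Finset (Fin n))) (p := fun p : Fin n => 0 < hherm.eigenvalues p)
      simp only [Finset.card_univ, Fintype.card_fin] at hsplit
      omega
    · intro p hp
      simp only [Finset.mem_filter, Finset.mem_univ, true_and, not_not] at hp
      linarith
  · refine aux_zero_block hherm k k' hkk' h1 h2 h3 h4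
      (Finset.univ.filter fun p : Fin n => ¬ hherm.eigenvalues p < 0) ?_ (-1) ?_
    · have hsplit := Finset.card_filter_add_card_filter_not
        (s := (Finset.univ : Finset (Fin n))) (p := fun p : Fin n => hherm.eigenvalues p < 0)
      simp only [Finset.card_univ, Fintype.card_fin] at hsplit
      omega
    · intro p hp
      simp only [Finset.mem_filter, Finset.mem_univ, true_and, not_not] at hp
      linarith
end

section
/- A Hermitian n×n matrix H (n ≥ 2) that has a 2×2 principal submatrix equal to zero cannot have n−1 strictly positive eigenvalues, and cannot have n−1 strictly negative eigenvalues. -/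
/-!
The quadratic form `v ↦ v* H v` vanishes on the plane spanned by `e i` and `e j`. If all
eigenvalues but the `k₀`-th were positive (resp. negative), the form would be definite on the
hyperplane orthogonal to the `k₀`-th eigenvector, and that hyperplane meets the plane nontrivially.
-/

open Finset Matrix

lemma sum_mul_sq_pos_of_forall_ne {ι : Type*} [Fintype ι] {c x : ι → ℝ} {k₀ : ι}
    (hc : ∀ k ≠ k₀, 0 < c k) (hx₀ : x k₀ = 0) {k : ι} (hxk : x k ≠ 0) :
    0 < ∑ l, c l * x l ^ 2 := by
  have hk : k ≠ k₀ := by rintro rfl; exact hxk hx₀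
  refine Finset.sum_pos' (fun l _ => ?_) ⟨k, mem_univ k, by positivity [hc k hk]⟩
  by_cases hl : l = k₀
  · simp [hl, hx₀]
  · exact mul_nonneg (hc l hl).le (sq_nonneg _)

namespace Matrix.IsHermitian

variable {𝕜 ι : Type*} [RCLike 𝕜] [Fintype ι] [DecidableEq ι] {A : Matrix ι ι 𝕜}

lemma star_eigenvectorUnitary_mulVec_apply (hA : A.IsHermitian) (v : ι → 𝕜) (k : ι) :
    (star (hA.eigenvectorUnitary : Matrix ι ι 𝕜) *ᵥ v) k = star ⇑(hA.eigenvectorBasis k) ⬝ᵥ v := by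
  simp [mulVec, dotProduct, star_apply, ← eigenvectorUnitary_apply]

lemma re_star_dotProduct_mulVec_eq_sum (hA : A.IsHermitian) (v : ι → 𝕜) :
    RCLike.re (star v ⬝ᵥ (A *ᵥ v)) =
      ∑ k, hA.eigenvalues k * ‖star ⇑(hA.eigenvectorBasis k) ⬝ᵥ v‖ ^ 2 := by
  set U : Matrix ι ι 𝕜 := (hA.eigenvectorUnitary : Matrix ι ι 𝕜)
  set w := star U *ᵥ v with hw
  have hstar : star v ᵥ* U = star w := by
    rw [hw, star_mulVec, star_eq_conjTranspose, conjTranspose_conjTranspose]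
  have hform :
      star v ⬝ᵥ (A *ᵥ v) = star w ⬝ᵥ (diagonal (RCLike.ofReal ∘ hA.eigenvalues) *ᵥ w) := by
    conv_lhs => rw [hA.spectral_theorem, Unitary.conjStarAlgAut_apply]
    rw [← mulVec_mulVec, ← mulVec_mulVec, dotProduct_mulVec, hstar]
  simp only [hform, ← hA.star_eigenvectorUnitary_mulVec_apply]
  simp only [dotProduct, mulVec_diagonal, Pi.star_apply, Function.comp_apply, map_sum]
  refine Finset.sum_congr rfl fun k _ => ?_
  rw [mul_left_comm, RCLike.star_def, RCLike.conj_mul, ← RCLike.ofReal_pow,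
    ← RCLike.ofReal_mul, RCLike.ofReal_re]

lemma exists_star_eigenvectorBasis_dotProduct_ne_zero (hA : A.IsHermitian) {v : ι → 𝕜}
    (hv : v ≠ 0) : ∃ k, star ⇑(hA.eigenvectorBasis k) ⬝ᵥ v ≠ 0 := by
  by_contra! h
  set U : Matrix ι ι 𝕜 := (hA.eigenvectorUnitary : Matrix ι ι 𝕜)
  have hw : star U *ᵥ v = 0 := funext fun k => by
    rw [hA.star_eigenvectorUnitary_mulVec_apply, h k, Pi.zero_apply]
  apply hv
  rw [← one_mulVec v, ← mem_unitaryGroup_iff.mp hA.eigenvectorUnitary.2, ← mulVec_mulVec, hw,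
    mulVec_zero]

lemma re_star_dotProduct_mulVec_pos (hA : A.IsHermitian) {k₀ : ι}
    (hpos : ∀ k ≠ k₀, 0 < hA.eigenvalues k) {v : ι → 𝕜} (hv : v ≠ 0)
    (horth : star ⇑(hA.eigenvectorBasis k₀) ⬝ᵥ v = 0) :
    0 < RCLike.re (star v ⬝ᵥ (A *ᵥ v)) := by
  obtain ⟨k, hk⟩ := hA.exists_star_eigenvectorBasis_dotProduct_ne_zero hv
  rw [hA.re_star_dotProduct_mulVec_eq_sum]
  exact sum_mul_sq_pos_of_forall_ne hpos (by simp [horth]) (k := k) (by simpa using hk)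

lemma re_star_dotProduct_mulVec_neg (hA : A.IsHermitian) {k₀ : ι}
    (hneg : ∀ k ≠ k₀, hA.eigenvalues k < 0) {v : ι → 𝕜} (hv : v ≠ 0)
    (horth : star ⇑(hA.eigenvectorBasis k₀) ⬝ᵥ v = 0) :
    RCLike.re (star v ⬝ᵥ (A *ᵥ v)) < 0 := by
  obtain ⟨k, hk⟩ := hA.exists_star_eigenvectorBasis_dotProduct_ne_zero hv
  rw [hA.re_star_dotProduct_mulVec_eq_sum, ← neg_pos, ← Finset.sum_neg_distrib]
  simp_rw [← neg_mul]
  exact sum_mul_sq_pos_of_forall_ne (fun k hk => neg_pos.mpr (hneg k hk)) (by simp [horth])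
    (k := k) (by simpa using hk)

end Matrix.IsHermitian

lemma Matrix.star_dotProduct_mulVec_eq_zero_of_support {R ι : Type*} [CommSemiring R]
    [StarRing R] [Fintype ι] {A : Matrix ι ι R} {v : ι → R}
    (h : ∀ a b, v a ≠ 0 → v b ≠ 0 → A a b = 0) : star v ⬝ᵥ (A *ᵥ v) = 0 := by
  refine Finset.sum_eq_zero fun a _ => ?_
  by_cases ha : v a = 0
  · simp [ha]
  refine mul_eq_zero_of_right _ (Finset.sum_eq_zero fun b _ => ?_)
  by_cases hb : v b = 0
  · simp [hb]
  simp [h a b ha hb]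

lemma exists_ne_zero_dotProduct_eq_zero_of_support_pair {K ι : Type*} [Field K] [Fintype ι]
    [DecidableEq ι] (u : ι → K) {i j : ι} (hij : i ≠ j) :
    ∃ v : ι → K, v ≠ 0 ∧ (∀ l, v l ≠ 0 → l = i ∨ l = j) ∧ u ⬝ᵥ v = 0 := by
  by_cases hu : u i = 0 ∧ u j = 0
  · refine ⟨Pi.single i 1, by simp, fun l hl => .inl ?_, by simp [hu.1]⟩
    by_contra hli
    simp [hli] at hl
  · refine ⟨Pi.single i (u j) - Pi.single j (u i), fun hv => hu ?_, fun l hl => ?_, ?_⟩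
    · have hvi := congrFun hv i
      have hvj := congrFun hv j
      simp [hij, hij.symm] at hvi hvj
      exact ⟨hvj, hvi⟩
    · by_contra! hl'
      simp [hl'.1, hl'.2] at hl
    · simp [dotProduct_sub, mul_comm]

lemma Fintype.exists_forall_ne_of_card_sub_one_le {ι : Type*} [Fintype ι] [Nonempty ι]
    (p : ι → Prop) [DecidablePred p] (h : Fintype.card ι - 1 ≤ #(univ.filter p)) :
    ∃ k₀, ∀ k ≠ k₀, p k := by
  have hcompl : #{k | ¬ p k} ≤ 1 := by
    have hsplit := Finset.card_filter_add_card_filter_not (s := univ) p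
    rw [card_univ] at hsplit
    have := Fintype.card_pos (α := ι)
    omega
  obtain ⟨k₀, hk₀⟩ := Finset.card_le_one_iff_subset_singleton.mp hcompl
  refine ⟨k₀, fun k hk => by_contra fun hpk => hk ?_⟩
  simpa using hk₀ (by simpa using hpk)

/-- A Hermitian `n × n` matrix with a `2 × 2` principal submatrix equal to zero (indices
`i ≠ j` with `H i i = H i j = H j i = H j j = 0`) cannot have `n-1` strictly positive
eigenvalues, and cannot have `n-1` strictly negative eigenvalues. -/
theorem hermitian_zero_principal_block_eigenvalue_bound
    (n : ℕ) (H : Matrix (Fin n) (Fin n) ℂ) (hH : H.IsHermitian)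
    (i j : Fin n) (hij : i ≠ j)
    (h1 : H i i = 0) (h2 : H i j = 0) (h3 : H j i = 0) (h4 : H j j = 0) :
    ¬ (n - 1 ≤ (Finset.univ.filter fun l : Fin n => 0 < hH.eigenvalues l).card) ∧
    ¬ (n - 1 ≤ (Finset.univ.filter fun l : Fin n => hH.eigenvalues l < 0).card) := by
  have : Nonempty (Fin n) := ⟨i⟩
  have hblock : ∀ a b, (a = i ∨ a = j) → (b = i ∨ b = j) → H a b = 0 := by
    rintro a b (rfl | rfl) (rfl | rfl) <;> assumption
  have isotropic : ∀ k₀, ∃ v : Fin n → ℂ, v ≠ 0 ∧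
      star ⇑(hH.eigenvectorBasis k₀) ⬝ᵥ v = 0 ∧ star v ⬝ᵥ (H *ᵥ v) = 0 := by
    intro k₀
    obtain ⟨v, hv, hsupp, horth⟩ :=
      exists_ne_zero_dotProduct_eq_zero_of_support_pair (star ⇑(hH.eigenvectorBasis k₀)) hij
    exact ⟨v, hv, horth, star_dotProduct_mulVec_eq_zero_of_support
      fun a b ha hb => hblock a b (hsupp a ha) (hsupp b hb)⟩
  constructor
  · intro hcard
    obtain ⟨k₀, hk₀⟩ := Fintype.exists_forall_ne_of_card_sub_one_le _ (by rwa [Fintype.card_fin])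
    obtain ⟨v, hv, horth, hzero⟩ := isotropic k₀
    simpa [hzero] using hH.re_star_dotProduct_mulVec_pos hk₀ hv horth
  · intro hcard
    obtain ⟨k₀, hk₀⟩ := Fintype.exists_forall_ne_of_card_sub_one_le _ (by rwa [Fintype.card_fin])
    obtain ⟨v, hv, horth, hzero⟩ := isotropic k₀
    simpa [hzero] using hH.re_star_dotProduct_mulVec_neg hk₀ hv horth
end

section
/- For λ₁, λ₂ ≥ 0 with λ₁² − λ₂² = 1 and any θ ∈ ℝ, the quantity β₊ − β₋, where β± = arg(λ₁ ± λ₂e^{−iθ}), lies in the open interval (−π/2, π/2); moreover every value in (−π/2, π/2) is attained for suitable λ₁, λ₂, θ. -/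
/-! For `z = λ₁ + λ₂e` and `w = λ₁ - λ₂e` with `|e| = 1`, the product `z * conj w` equals
`(λ₁² - λ₂²) + 2λ₁λ₂ (Im e) i`. Both `z` and `w` lie in the open right half-plane, so their
arguments differ by less than `π` and `arg z - arg w = arg (z * conj w)`, which for
`λ₁² - λ₂² = 1` and `e = e^{-iθ}` is `-arctan (2λ₁λ₂ sin θ)`. Every value `x` is attained by
`θ = -x` and `(λ₁, λ₂) = (cosh u, sinh u)` with `sinh 2u = 1 / cos x`, since then
`2λ₁λ₂ sin x = tan x`. -/

open Real

namespace Complex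

open ComplexConjugate

theorem arg_eq_arctan_of_re_pos {z : ℂ} (hz : 0 < z.re) : arg z = Real.arctan (z.im / z.re) :=
  (arctan_eq_of_tan_eq (tan_arg z) (abs_lt.1 (abs_arg_lt_pi_div_two_iff.2 (Or.inl hz)))).symm

theorem add_mul_mul_conj_sub_mul {a b : ℝ} {e : ℂ} (he : ‖e‖ = 1) :
    (a + b * e) * conj (a - b * e) = ⟨a ^ 2 - b ^ 2, 2 * a * b * e.im⟩ := by
  have hsq : e.re * e.re + e.im * e.im = 1 := by
    rw [← normSq_apply, normSq_eq_norm_sq, he, one_pow]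
  apply ext
  · simp only [mul_re, add_re, add_im, sub_re, sub_im, conj_re, conj_im, ofReal_re, ofReal_im,
      im_ofReal_mul]
    linear_combination (-b ^ 2) * hsq
  · simp only [mul_im, add_re, add_im, sub_re, sub_im, conj_re, conj_im, ofReal_re, ofReal_im,
      re_ofReal_mul]
    ring

theorem arg_mul_conj_of_re_pos {z w : ℂ} (hz : 0 < z.re) (hw : 0 < w.re) :
    arg (z * conj w) = arg z - arg w := by
  have hz0 : z ≠ 0 := fun h => by simp [h] at hz
  have hw0 : w ≠ 0 := fun h => by simp [h] at hw
  have hz_arg := abs_lt.1 (abs_arg_lt_pi_div_two_iff.2 (Or.inl hz))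
  have hw_arg := abs_lt.1 (abs_arg_lt_pi_div_two_iff.2 (Or.inl hw))
  have harg_conj : arg (conj w) = -arg w := by
    rw [arg_conj, if_neg (by linarith [pi_pos])]
  rw [arg_mul hz0 ((map_ne_zero conj).2 hw0), harg_conj, sub_eq_add_neg]
  constructor <;> linarith

theorem arg_add_mul_sub_arg_sub_mul {a b : ℝ} {e : ℂ} (hba : |b| < a) (he : ‖e‖ = 1) :
    arg (a + b * e) - arg (a - b * e) = Real.arctan (2 * a * b * e.im / (a ^ 2 - b ^ 2)) := by
  have hbe : |b * e.re| ≤ |b| := by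
    rw [abs_mul]
    exact mul_le_of_le_one_right (abs_nonneg b) (he ▸ abs_re_le_norm e)
  have hplus : 0 < (a + b * e).re := by
    simp only [add_re, ofReal_re, re_ofReal_mul]
    linarith [neg_abs_le (b * e.re)]
  have hminus : 0 < (a - b * e).re := by
    simp only [sub_re, ofReal_re, re_ofReal_mul]
    linarith [le_abs_self (b * e.re)]
  have hsq : 0 < a ^ 2 - b ^ 2 := by nlinarith [sq_abs b, abs_nonneg b]
  rw [← arg_mul_conj_of_re_pos hplus hminus, add_mul_mul_conj_sub_mul he]
  exact arg_eq_arctan_of_re_pos hsq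

end Complex

open Complex in
theorem arg_add_mul_exp_sub_arg_sub_mul_exp {l1 l2 : ℝ} (hl1 : 0 ≤ l1) (h : l1 ^ 2 - l2 ^ 2 = 1)
    (θ : ℝ) :
    arg (l1 + l2 * exp (-θ * I)) - arg (l1 - l2 * exp (-θ * I))
      = Real.arctan (-(2 * l1 * l2 * Real.sin θ)) := by
  have hl2 : |l2| < l1 := abs_lt_of_sq_lt_sq (by linarith) hl1
  rw [← ofReal_neg, arg_add_mul_sub_arg_sub_mul hl2 (norm_exp_ofReal_mul_I _), h,
    exp_ofReal_mul_I_im, Real.sin_neg]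
  ring_nf

/-- For `λ₁, λ₂ ≥ 0` with `λ₁² - λ₂² = 1` and any `θ`, the difference
`β₊ - β₋` of the principal arguments `β± = arg(λ₁ ± λ₂ e^{-iθ})` lies in `(-π/2, π/2)`;
moreover every value in `(-π/2, π/2)` is attained for suitable `λ₁, λ₂, θ`. -/
theorem arg_difference_range :
    (∀ l1 l2 θ : ℝ, 0 ≤ l1 → 0 ≤ l2 → l1 ^ 2 - l2 ^ 2 = 1 →
      Complex.arg ((l1 : ℂ) + (l2 : ℂ) * Complex.exp (-(θ : ℂ) * Complex.I))
          - Complex.arg ((l1 : ℂ) - (l2 : ℂ) * Complex.exp (-(θ : ℂ) * Complex.I))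
        ∈ Set.Ioo (-(π / 2)) (π / 2)) ∧
    (∀ x ∈ Set.Ioo (-(π / 2)) (π / 2), ∃ l1 l2 θ : ℝ,
      0 ≤ l1 ∧ 0 ≤ l2 ∧ l1 ^ 2 - l2 ^ 2 = 1 ∧
      Complex.arg ((l1 : ℂ) + (l2 : ℂ) * Complex.exp (-(θ : ℂ) * Complex.I))
          - Complex.arg ((l1 : ℂ) - (l2 : ℂ) * Complex.exp (-(θ : ℂ) * Complex.I)) = x) := by
  refine ⟨fun l1 l2 θ hl1 _ h => ?_, fun x hx => ?_⟩
  · rw [arg_add_mul_exp_sub_arg_sub_mul_exp hl1 h]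
    exact arctan_mem_Ioo _
  · have hcos : 0 < cos x := cos_pos_of_mem_Ioo hx
    set u := arsinh (cos x)⁻¹ / 2 with hu
    have hu_nonneg : 0 ≤ u := div_nonneg (arsinh_nonneg_iff.2 (inv_nonneg.2 hcos.le)) zero_le_two
    have hsinh : 2 * cosh u * sinh u = (cos x)⁻¹ := by
      rw [mul_right_comm, ← sinh_two_mul, hu, mul_div_cancel₀ _ two_ne_zero, sinh_arsinh]
    refine ⟨cosh u, sinh u, -x, (cosh_pos u).le, sinh_nonneg_iff.2 hu_nonneg,
      cosh_sq_sub_sinh_sq u, ?_⟩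
    rw [arg_add_mul_exp_sub_arg_sub_mul_exp (cosh_pos u).le (cosh_sq_sub_sinh_sq u), hsinh,
      sin_neg, mul_neg, neg_neg, inv_mul_eq_div, ← tan_eq_sin_div_cos, arctan_tan hx.1 hx.2]
end
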